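/- arXiv:2007.14255 — 4 statements merged into one kernel-verified Lean document; each statement's English description precedes it below -/
import Mathlib

section
/- For any integer r, the p-adic polylogarithm ln_r^{(p)}(z) = Σ_{n≥1, p∤n} z^n/n^r, viewed as an element of the p-adic completion of Z_p[z, 1/(1-z)], satisfies the functional equation ln_r^{(p)}(z) = (-1)^{r+1} · ln_r^{(p)}(z^{-1}). -/
/-!
The `p`-adic polylogarithm `ln_r^{(p)}(z) = Σ_{n ≥ 1, p ∤ n} z^n / n^r`, an element of the
`p`-adic completion of `ℤ_p[z, (1-z)⁻¹]`, is here realized pointwise: for `z` with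
`‖z‖ = 1` and `‖1 - z‖ = 1` (so that both `z` and `1 - z` are units of the completion),
its value is the limit of the partial expressions
`(1 - z^{p^s})⁻¹ · Σ_{1 ≤ n < p^s, p ∤ n} z^n / n^r`.
-/

open Filter

/-- The `s`-th partial expression computing the `p`-adic polylogarithm
`ln_r^{(p)}(z) = lim_s (1 - z^{p^s})⁻¹ Σ_{1 ≤ n < p^s, p ∤ n} z^n / n^r`. -/
noncomputable def polylogSeq (p : ℕ) [Fact p.Prime] (r : ℤ) (z : ℚ_[p]) (s : ℕ) : ℚ_[p] :=
  (1 - z ^ p ^ s)⁻¹ *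
    ∑ n ∈ Finset.range (p ^ s), if ¬ (p ∣ n) then z ^ n * (n : ℚ_[p]) ^ (-r) else 0

/-- `L` is the value of the `p`-adic polylogarithm `ln_r^{(p)}` at `z`. -/
def IsPolylog (p : ℕ) [Fact p.Prime] (r : ℤ) (z L : ℚ_[p]) : Prop :=
  Tendsto (polylogSeq p r z) atTop (nhds L)

/-!
Multiplying the `s`-th partial sum at `z⁻¹` by `z^{p^s}` and reflecting `n ↦ p^s - n`, which
preserves `p ∤ n`, turns `(-1)^{r+1}` times the `s`-th partial expression at `z⁻¹` into the one
at `z` with `n^{-r}` replaced by `(n - p^s)^{-r}`. As `n` is a `p`-adic unit, each term changes by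
at most `‖p^s‖`, while `1 - z^{p^s} ≡ 1 - z (mod p)` stays a unit. So the partial expressions at
`z` and at `z⁻¹` are `p^{-s}`-close and their limits satisfy the functional equation.
-/

open Finset Topology

section Ultrametric

variable {K : Type*} [NormedField K] [IsUltrametricDist K]

theorem norm_pow_sub_pow_le {a b : K} (ha : ‖a‖ ≤ 1) (hb : ‖b‖ ≤ 1) (n : ℕ) :
    ‖a ^ n - b ^ n‖ ≤ ‖a - b‖ := by
  have hsum : ‖∑ i ∈ range n, a ^ i * b ^ (n - 1 - i)‖ ≤ 1 :=
    IsUltrametricDist.norm_sum_le_of_forall_le_of_nonneg zero_le_one fun i _ => by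
      rw [norm_mul, norm_pow, norm_pow]
      exact mul_le_one₀ (pow_le_one₀ (norm_nonneg a) ha) (by positivity)
        (pow_le_one₀ (norm_nonneg b) hb)
  rw [← geom_sum₂_mul, norm_mul]
  exact mul_le_of_le_one_left (norm_nonneg _) hsum

theorem norm_zpow_sub_zpow_le {a b : K} (ha : ‖a‖ = 1) (hb : ‖b‖ = 1) (k : ℤ) :
    ‖a ^ k - b ^ k‖ ≤ ‖a - b‖ := by
  rcases k with n | n
  · simpa using norm_pow_sub_pow_le ha.le hb.le n
  · have ha0 : a ^ (n + 1) ≠ 0 := pow_ne_zero _ (norm_ne_zero_iff.mp (by simp [ha]))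
    have hb0 : b ^ (n + 1) ≠ 0 := pow_ne_zero _ (norm_ne_zero_iff.mp (by simp [hb]))
    rw [zpow_negSucc, zpow_negSucc, inv_sub_inv ha0 hb0, norm_div, norm_mul, norm_pow,
      norm_pow, ha, hb, one_pow, mul_one, div_one, norm_sub_rev]
    exact norm_pow_sub_pow_le ha.le hb.le _

theorem norm_zpow_sub_zpow_sub_le {a x : K} (ha : ‖a‖ = 1) (hx : ‖x‖ < 1) (k : ℤ) :
    ‖a ^ k - (a - x) ^ k‖ ≤ ‖x‖ := by
  have hax : ‖a - x‖ = 1 := by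
    rw [sub_eq_add_neg, IsUltrametricDist.norm_add_eq_max_of_norm_ne_norm
      (by rw [ha, norm_neg]; exact hx.ne'), ha, norm_neg, max_eq_left hx.le]
  simpa using norm_zpow_sub_zpow_le ha hax k

end Ultrametric

theorem Finset.sum_range_reflect_of_eq_zero {M : Type*} [AddCommMonoid M] (f : ℕ → M) {N : ℕ}
    (h0 : f 0 = 0) (hN : f N = 0) : ∑ n ∈ range N, f (N - n) = ∑ n ∈ range N, f n := by
  simpa [sum_range_succ, h0, hN] using sum_range_reflect f (N + 1)

theorem pow_mul_sum_inv_pow_eq_sum_reflect {K : Type*} [Field K] {p N : ℕ} (hpN : p ∣ N)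
    (g : ℕ → K) {z : K} (hz : z ≠ 0) :
    z ^ N * ∑ n ∈ range N, (if ¬ p ∣ n then z⁻¹ ^ n * g n else 0) =
      ∑ n ∈ range N, if ¬ p ∣ n then z ^ n * g (N - n) else 0 := by
  rw [mul_sum, ← sum_range_reflect_of_eq_zero (fun n => if ¬ p ∣ n then z ^ n * g (N - n) else 0)
    (by simp) (by simp [hpN])]
  refine sum_congr rfl fun n hn => ?_
  have hnN : n ≤ N := (mem_range.mp hn).le
  by_cases hn : p ∣ n
  · simp [hn, Nat.dvd_sub_iff_right hnN hpN]
  · simp only [Nat.dvd_sub_iff_right hnN hpN, Nat.sub_sub_self hnN, hn, not_false_eq_true,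
      if_true]
    rw [pow_sub₀ _ hz hnN, inv_pow]
    ring

namespace Padic

variable {p : ℕ} [Fact p.Prime]

theorem norm_pow_prime_pow_sub_lt_one {z : ℚ_[p]} (hz : ‖z‖ ≤ 1) (s : ℕ) :
    ‖z ^ p ^ s - z‖ < 1 := by
  set y : ℤ_[p] := ⟨z, hz⟩
  have hy : y ^ p ^ s - y ∈ IsLocalRing.maximalIdeal ℤ_[p] := by
    rw [← PadicInt.ker_toZMod, RingHom.mem_ker, map_sub, map_pow, ZMod.pow_card_pow, sub_self]
  have := PadicInt.mem_nonunits.mp hy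
  rwa [PadicInt.norm_def, PadicInt.coe_sub, PadicInt.coe_pow] at this

theorem norm_one_sub_pow_prime_pow {z : ℚ_[p]} (hz : ‖z‖ ≤ 1) (h1z : ‖1 - z‖ = 1) (s : ℕ) :
    ‖1 - z ^ p ^ s‖ = 1 :=
  h1z ▸ norm_eq_of_norm_sub_lt_right (by
    rw [h1z, show 1 - z ^ p ^ s - (1 - z) = -(z ^ p ^ s - z) by ring, norm_neg]
    exact norm_pow_prime_pow_sub_lt_one hz s)

end Padic

section Polylog

variable {p : ℕ} [hp : Fact p.Prime] (r : ℤ)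

theorem polylogSeq_sub_neg_one_zpow_mul_polylogSeq_inv {z : ℚ_[p]} (hz : z ≠ 0) {s : ℕ}
    (hs : s ≠ 0) :
    polylogSeq p r z s - (-1) ^ (r + 1) * polylogSeq p r z⁻¹ s =
      (1 - z ^ p ^ s)⁻¹ * ∑ n ∈ range (p ^ s),
        if ¬ p ∣ n then z ^ n * ((n : ℚ_[p]) ^ (-r) - ((n : ℚ_[p]) - (p : ℚ_[p]) ^ s) ^ (-r))
        else 0 := by
  have hinv : (1 - z⁻¹ ^ p ^ s)⁻¹ = -(z ^ p ^ s * (1 - z ^ p ^ s)⁻¹) := by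
    rw [show 1 - z⁻¹ ^ p ^ s = -(z ^ p ^ s)⁻¹ * (1 - z ^ p ^ s) by
      rw [neg_mul, mul_sub, mul_one, inv_mul_cancel₀ (pow_ne_zero _ hz), inv_pow]; ring]
    rw [mul_inv, inv_neg, inv_inv, neg_mul]
  rw [polylogSeq, polylogSeq, hinv, neg_mul, mul_comm (z ^ p ^ s), mul_assoc,
    pow_mul_sum_inv_pow_eq_sum_reflect (dvd_pow_self p hs) _ hz, zpow_add_one₀ (by norm_num),
    show ∀ a b c d : ℚ_[p], a * b - c * -1 * -(a * d) = a * (b - c * d) by intros; ring,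
    mul_sum, ← sum_sub_distrib]
  congr 1
  refine sum_congr rfl fun n hn => ?_
  by_cases hpn : p ∣ n
  · simp [hpn]
  · simp only [hpn, not_false_eq_true, if_true]
    have hsign : (-1 : ℚ_[p]) ^ r * (((p ^ s - n : ℕ) : ℚ_[p])) ^ (-r) =
        ((n : ℚ_[p]) - (p : ℚ_[p]) ^ s) ^ (-r) := by
      rw [Nat.cast_sub (mem_range.mp hn).le, show ((p ^ s : ℕ) : ℚ_[p]) - n =
        (-1) * ((n : ℚ_[p]) - (p : ℚ_[p]) ^ s) by push_cast; ring, mul_zpow, ← mul_assoc,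
        ← zpow_add₀ (by norm_num), add_neg_cancel, zpow_zero, one_mul]
    rw [mul_left_comm, hsign, mul_sub]

theorem norm_polylogSeq_sub_neg_one_zpow_mul_polylogSeq_inv_le {z : ℚ_[p]} (hz : ‖z‖ = 1)
    (h1z : ‖1 - z‖ = 1) {s : ℕ} (hs : s ≠ 0) :
    ‖polylogSeq p r z s - (-1) ^ (r + 1) * polylogSeq p r z⁻¹ s‖ ≤ ‖(p : ℚ_[p])‖ ^ s := by
  have hps : ‖(p : ℚ_[p]) ^ s‖ < 1 := by
    rw [norm_pow]
    exact pow_lt_one₀ (norm_nonneg _) Padic.norm_p_lt_one hs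
  rw [polylogSeq_sub_neg_one_zpow_mul_polylogSeq_inv r (norm_ne_zero_iff.mp (by simp [hz])) hs,
    norm_mul, norm_inv, Padic.norm_one_sub_pow_prime_pow hz.le h1z, inv_one, one_mul]
  refine IsUltrametricDist.norm_sum_le_of_forall_le_of_nonneg (by positivity) fun n _ => ?_
  by_cases hn : p ∣ n
  · simp only [hn, not_true_eq_false, if_false, norm_zero]
    positivity
  · simp only [hn, not_false_eq_true, if_true]
    have hn1 : ‖(n : ℚ_[p])‖ = 1 :=
      Padic.norm_natCast_eq_one_iff.mpr (hp.out.coprime_iff_not_dvd.mpr hn)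
    rw [norm_mul, norm_pow, hz, one_pow, one_mul, ← norm_pow]
    exact norm_zpow_sub_zpow_sub_le hn1 hps _

end Polylog

/-- For any integer `r`, the `p`-adic polylogarithm satisfies the
functional equation `ln_r^{(p)}(z) = (-1)^{r+1} · ln_r^{(p)}(z⁻¹)`. -/
theorem polylog_inv_functional_equation (p : ℕ) [Fact p.Prime] (r : ℤ)
    (z L L' : ℚ_[p]) (hz : ‖z‖ = 1) (h1z : ‖1 - z‖ = 1)
    (hL : IsPolylog p r z L) (hL' : IsPolylog p r z⁻¹ L') :
    L = (-1 : ℚ_[p]) ^ (r + 1) * L' := by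
  have hclose : Tendsto (fun s => polylogSeq p r z s - (-1) ^ (r + 1) * polylogSeq p r z⁻¹ s)
      atTop (𝓝 0) :=
    squeeze_zero_norm' ((eventually_ne_atTop 0).mono fun s hs =>
        norm_polylogSeq_sub_neg_one_zpow_mul_polylogSeq_inv_le r hz h1z hs)
      (tendsto_pow_atTop_nhds_zero_of_lt_one (norm_nonneg _) Padic.norm_p_lt_one)
  exact sub_eq_zero.mp (tendsto_nhds_unique (hL.sub (hL'.const_mul _)) hclose)
end

section
/- In the setting of the previous Frobenius-fixed-point lemma: for b_{n-1} ∈ V(W_{n-1}), the map φ : V(W_n)_{b_{n-1}} → V(W_n)_{φ(b_{n-1})} defined by φ(a_n) = F_W^{-1}-twist of σ_n ∘ a_n is a constant map on the fiber V(W_n)_{b_{n-1}} := {a_n ∈ V(W_n) : a_n reduces to b_{n-1}}. -/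
/-!
The difference `(β_i^p + p f_i(β)) - (α_i^p + p f_i(α))` is divisible by `p^n`: for the first
part, `β_i^p - α_i^p = p α_i^(p-1) (β_i - α_i) + O((β_i - α_i)^2)` and `2(n-1) ≥ n`; for the
second, polynomial evaluation preserves congruences mod `p^(n-1)`. Any ring automorphism,
in particular `F⁻¹`, fixes `p^n` and so preserves divisibility by it.
-/

theorem natCast_pow_succ_dvd_pow_sub_pow {R : Type*} [CommRing R] {p k : ℕ} {a b : R}
    (hk : 1 ≤ k) (h : (p : R) ^ k ∣ a - b) : (p : R) ^ (k + 1) ∣ a ^ p - b ^ p := by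
  obtain ⟨c, hc⟩ := h
  have hexp : a ^ p - b ^ p = ((b + (a - b)) ^ p - b ^ (p - 1) * (a - b) * p - b ^ p)
      + b ^ (p - 1) * (a - b) * p := by ring
  rw [hexp]
  refine dvd_add ?_ ?_
  · calc (p : R) ^ (k + 1) ∣ ((p : R) ^ k) ^ 2 := by
          rw [← pow_mul]; exact pow_dvd_pow _ (by omega)
      _ ∣ (a - b) ^ 2 := pow_dvd_pow_of_dvd ⟨c, hc⟩ 2
      _ ∣ _ := sq_dvd_add_pow_sub_sub (a - b) b p
  · exact ⟨b ^ (p - 1) * c, by rw [hc]; ring⟩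

theorem MvPolynomial.eval_sub_eval_mem {R σ : Type*} [CommRing R] (I : Ideal R)
    {α β : σ → R} (h : ∀ j, β j - α j ∈ I) (g : MvPolynomial σ R) :
    eval β g - eval α g ∈ I := by
  have hmk : Ideal.Quotient.mk I ∘ β = Ideal.Quotient.mk I ∘ α := by
    ext j
    exact (Ideal.Quotient.mk_eq_mk_iff_sub_mem _ _).mpr (h j)
  rw [← Ideal.Quotient.mk_eq_mk_iff_sub_mem, eval, eval, coe_eval₂Hom, coe_eval₂Hom,
    eval₂_comp_left, eval₂_comp_left, hmk]

theorem phi_constant_on_fiber_general (p : ℕ)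
    (W : Type*) [CommRing W] (F : W ≃+* W)
    (n m : ℕ) (hn : 2 ≤ n)
    (f : Fin m → MvPolynomial (Fin m) W)
    (α β : Fin m → W)
    (hcong : ∀ i, ∃ c : W, β i - α i = (p : W) ^ (n - 1) * c) :
    ∀ i, ∃ c : W,
      F.symm (β i ^ p + (p : W) * MvPolynomial.eval β (f i)) -
        F.symm (α i ^ p + (p : W) * MvPolynomial.eval α (f i)) = (p : W) ^ n * c := by
  intro i
  have hpow : (p : W) ^ n ∣ β i ^ p - α i ^ p := by
    have := natCast_pow_succ_dvd_pow_sub_pow (by omega : 1 ≤ n - 1) (hcong i)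
    rwa [Nat.sub_add_cancel (by omega : 1 ≤ n)] at this
  have heval : (p : W) ^ (n - 1) ∣ MvPolynomial.eval β (f i) - MvPolynomial.eval α (f i) :=
    Ideal.mem_span_singleton.mp <| MvPolynomial.eval_sub_eval_mem _
      (fun j => Ideal.mem_span_singleton.mpr (hcong j)) (f i)
  have hsum : (p : W) ^ n ∣ β i ^ p + (p : W) * MvPolynomial.eval β (f i) -
      (α i ^ p + (p : W) * MvPolynomial.eval α (f i)) := by
    rw [add_sub_add_comm, ← mul_sub]
    refine dvd_add hpow ?_
    rw [show n = n - 1 + 1 by omega, pow_succ']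
    exact mul_dvd_mul_left _ heval
  have hsymm := map_dvd F.symm hsum
  rw [map_pow, map_natCast, map_sub] at hsymm
  exact hsymm

theorem phi_constant_on_fiber (p : ℕ) (hp : p.Prime)
    (W : Type*) [CommRing W] (F : W ≃+* W)
    (hF : ∀ w : W, ∃ y : W, F w = w ^ p + (p : W) * y)
    (n m : ℕ) (hn : 2 ≤ n)
    (f : Fin m → MvPolynomial (Fin m) W)
    (α β : Fin m → W)
    (hcong : ∀ i, ∃ c : W, β i - α i = (p : W) ^ (n - 1) * c) :
    ∀ i, ∃ c : W,
      F.symm (β i ^ p + (p : W) * MvPolynomial.eval β (f i)) -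
        F.symm (α i ^ p + (p : W) * MvPolynomial.eval α (f i)) = (p : W) ^ n * c :=
  phi_constant_on_fiber_general p W F n m hn f α β hcong
end

section
/- Let ∇ be the connection on the free module with basis ω, η over K((t)) defined by ∇(ω) = −(dt/3t)·ω + (dt/(12(t²−t)))·η and ∇(η) = (4dt/3t)·ω + (dt/3t)·η. Set F(t) = (1/(2√−3))·₂F₁(1/3,2/3;1;t), ω̂ := F(t)^{−1}·ω, and η̂ := 4(1−t)(F(t)+3tF'(t))·ω + F(t)·η. Then ∇(ω̂) = (dt/(12(t²−t)F(t)²)) ⊗ η̂ and ∇(η̂) = 0. -/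
/-!
**STATEMENT 13.** Let `∇` be the connection on the free module with basis `ω, η` over
`K((t))` defined by `∇(ω) = -(dt/3t)·ω + (dt/(12(t²-t)))·η` and
`∇(η) = (4dt/3t)·ω + (dt/3t)·η`.  Set `F(t) = (1/(2√-3))·₂F₁(1/3,2/3;1;t)`,
`ω̂ := F(t)⁻¹·ω` and `η̂ := 4(1-t)(F(t)+3tF'(t))·ω + F(t)·η`.  Then
`∇(ω̂) = (dt/(12(t²-t)F(t)²)) ⊗ η̂` and `∇(η̂) = 0`.

After clearing the denominators (multiplying by the invertible elements `3t`,
`12t(t-1)`, `12t(t-1)F²` of `K((t))`), the two assertions are equivalent to the following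
three identities of power series, where `G := 4(1-t)(F + 3tF')` is the `ω`-coordinate of
`η̂`:
 * `∇(η̂) = 0`, `ω`-component: `3t·G' - G + 4F = 0`;
 * `∇(η̂) = 0`, `η`-component: `12t(t-1)·F' + G + 4(t-1)·F = 0`;
 * `∇(ω̂) = (dt/(12(t²-t)F²)) ⊗ η̂`, `ω`-component: `12t(t-1)F²·(F⁻¹)' - 4(t-1)F = G`
   (the `η`-component being the identity `F⁻¹·F² = F`).
-/

open PowerSeries

variable (K : Type*) [Field K] [CharZero K]

/-- `F = (1/(2s))·₂F₁(1/3, 2/3; 1; t)` where `s = √-3`. -/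
noncomputable def hypFs (s : K) : PowerSeries K :=
  PowerSeries.mk fun n =>
    (2 * s)⁻¹ * ((ascPochhammer K n).eval (3⁻¹) * (ascPochhammer K n).eval (2 / 3)) /
      ((n.factorial : K) * (n.factorial : K))

/-- `G = 4(1-t)(F + 3t·F')`, the `ω`-coordinate of `η̂`. -/
noncomputable def etaHatCoord (s : K) : PowerSeries K :=
  4 * (1 - X) * (hypFs K s + 3 * X * derivative K (hypFs K s))

/-!
`F` is a constant multiple of `₂F₁(1/3, 2/3; 1; t)`, so it satisfies the hypergeometric equation
`9t(1-t)F'' + 9(1-2t)F' - 2F = 0`, which is checked coefficientwise from the ratio of consecutive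
coefficients of `₂F₁`. The `ω`-component of `∇(η̂) = 0` is `4t` times this equation and the
`η`-component is the definition of `G`. Since `F(0) = 1/(2√-3) ≠ 0`, `F` is a unit, and the
remaining identity reduces to `F²·(F⁻¹)' = -F'`.
-/

theorem Derivation.map_ofNat {R A M : Type*} [CommSemiring R] [CommSemiring A] [AddCommMonoid M]
    [Algebra R A] [Module A M] [Module R M] (D : Derivation R A M) (n : ℕ) [n.AtLeastTwo] :
    D (ofNat(n) : A) = 0 := by
  rw [← Nat.cast_ofNat]
  exact D.map_natCast n

theorem ascPochhammer_eval_ne_zero {R : Type*} [CommRing R] [IsDomain R] {c : R}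
    (hc : ∀ k : ℕ, c + k ≠ 0) (n : ℕ) : (ascPochhammer R n).eval c ≠ 0 := by
  rw [Ne, ascPochhammer_eval_eq_zero_iff]
  rintro ⟨k, -, hk⟩
  exact hc k (by rw [hk, add_neg_cancel])

namespace PowerSeries

section Derivative

variable {R : Type*} [CommSemiring R]

theorem coeff_X_mul_derivative (f : R⟦X⟧) (n : ℕ) :
    coeff n (X * derivative R f) = n * coeff n f := by
  cases n with
  | zero => simp
  | succ n => rw [coeff_succ_X_mul, coeff_derivative, mul_comm, Nat.cast_succ]

end Derivative

theorem sq_mul_derivative_inv {k : Type*} [Field k] {f : k⟦X⟧} (hf : constantCoeff f ≠ 0) :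
    f ^ 2 * derivative k f⁻¹ = -derivative k f := by
  have hinv : f * f⁻¹ = 1 := PowerSeries.mul_inv_cancel f hf
  rw [derivative_inv']
  linear_combination (-(f * f⁻¹ + 1) * derivative k f) * hinv

section Hypergeometric

variable {K} {c : K}

noncomputable def hypergeometric (a b c : K) : K⟦X⟧ :=
  mk (ordinaryHypergeometricCoefficient a b c)

theorem coeff_succ_hypergeometric (a b : K) (hc : ∀ k : ℕ, c + k ≠ 0) (n : ℕ) :
    (n + 1) * (c + n) * coeff (n + 1) (hypergeometric a b c) =
      (a + n) * (b + n) * coeff n (hypergeometric a b c) := by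
  have hcn := ascPochhammer_eval_ne_zero hc n
  simp only [hypergeometric, coeff_mk, ordinaryHypergeometricCoefficient, ascPochhammer_succ_eval,
    Nat.factorial_succ, Nat.cast_mul, Nat.cast_succ]
  field_simp [hc n]

theorem hypergeometric_ode (a b : K) (hc : ∀ k : ℕ, c + k ≠ 0) :
    X * (1 - X) * derivative K (derivative K (hypergeometric a b c)) +
      (C c - C (a + b + 1) * X) * derivative K (hypergeometric a b c) -
        C (a * b) * hypergeometric a b c = 0 := by
  set F := hypergeometric a b c
  have hX2 : X * (1 - X) * derivative K (derivative K F) =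
      X * derivative K (derivative K F) - X * derivative K (X * derivative K F) +
        X * derivative K F := by
    simp only [Derivation.leibniz, derivative_X, smul_eq_mul]
    ring
  ext n
  rw [hX2]
  simp only [map_add, map_sub, map_one, sub_mul, add_mul, one_mul, mul_assoc, coeff_C_mul,
    coeff_X_mul_derivative, coeff_derivative, map_zero]
  linear_combination (coeff_succ_hypergeometric a b hc n)

end Hypergeometric

section GaussManin

variable {K}

theorem hypFs_eq_C_mul_hypergeometric (s : K) :
    hypFs K s = C (2 * s)⁻¹ * hypergeometric 3⁻¹ (2 / 3) 1 := by
  ext n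
  simp only [hypFs, hypergeometric, coeff_mk, coeff_C_mul, ordinaryHypergeometricCoefficient,
    ascPochhammer_eval_one]
  ring

theorem hypFs_ode (s : K) :
    9 * X * (1 - X) * derivative K (derivative K (hypFs K s)) +
      9 * (1 - 2 * X) * derivative K (hypFs K s) - 2 * hypFs K s = 0 := by
  have ode := hypergeometric_ode (3⁻¹ : K) (2 / 3) (c := 1) fun k => by norm_cast; omega
  have hprod : (2 : K⟦X⟧) = 9 * C (3⁻¹ * (2 / 3)) := by
    rw [← map_ofNat C 9, ← map_mul]; norm_num [map_ofNat]
  have hsum : C (3⁻¹ + 2 / 3 + 1 : K) = 2 := by norm_num [map_ofNat]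
  rw [map_one, hsum] at ode
  rw [hypFs_eq_C_mul_hypergeometric]
  simp only [Derivation.leibniz, derivative_C, smul_eq_mul, mul_zero, add_zero]
  linear_combination (9 * C (2 * s)⁻¹) * ode - (C (2 * s)⁻¹ * hypergeometric 3⁻¹ (2 / 3) 1) * hprod

omit [CharZero K] in
theorem derivative_etaHatCoord (s : K) :
    derivative K (etaHatCoord K s) =
      4 * (1 - X) * (4 * derivative K (hypFs K s) +
        3 * X * derivative K (derivative K (hypFs K s))) -
      4 * (hypFs K s + 3 * X * derivative K (hypFs K s)) := by
  simp only [etaHatCoord, Derivation.leibniz, smul_eq_mul, map_add, map_sub, derivative_X,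
    Derivation.map_ofNat, Derivation.map_one_eq_zero]
  ring

end GaussManin

end PowerSeries

theorem gaussManin_symplectic_basis (s : K) (hs : s * s = -3) :
    -- `∇(η̂) = 0`:
    (3 * (X : PowerSeries K) * derivative K (etaHatCoord K s) - etaHatCoord K s +
        4 * hypFs K s = 0) ∧
    (12 * (X : PowerSeries K) * (X - 1) * derivative K (hypFs K s) + etaHatCoord K s +
        4 * (X - 1) * hypFs K s = 0) ∧
    -- `∇(ω̂) = (dt/(12(t²-t)F²)) ⊗ η̂`:
    (12 * (X : PowerSeries K) * (X - 1) * hypFs K s ^ 2 * derivative K (hypFs K s)⁻¹ -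
        4 * (X - 1) * hypFs K s = etaHatCoord K s) := by
  have hF : constantCoeff (hypFs K s) ≠ 0 := by
    have hs0 : s ≠ 0 := by rintro rfl; norm_num at hs
    simpa [hypFs] using hs0
  refine ⟨?_, ?_, ?_⟩
  · rw [derivative_etaHatCoord, etaHatCoord]
    linear_combination (4 * X : K⟦X⟧) * hypFs_ode s
  · rw [etaHatCoord]
    ring
  · rw [mul_assoc _ (hypFs K s ^ 2), sq_mul_derivative_inv hF, etaHatCoord]
    ring
end

section
/- Let (M,∇,Φ) be an object of the category F-MIC(B_K^†,σ) (coherent B_K^†-module with integrable connection and horizontal Frobenius), sitting in an extension 0 → H → M → O_S → 0 in the category of filtered F-isocrystals Fil-F-MIC(S,σ), and suppose Fil⁰H_dR = 0. If the class u(M) = (∇(e), (1−Φ)e) ∈ H¹(𝒮(H)) vanishes, where e ∈ Fil⁰M is the unique filtered lift of 1, then the extension splits. Consequently the map u : Ext¹_{Fil-F-MIC(S,σ)}(O_S, H) → H¹(𝒮(H)) is injective. -/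
open scoped TensorProduct

theorem extension_splits_of_invariant_vanishes_general
    (A : Type*) [CommRing A]
    (Ω : Type*) [AddCommGroup Ω] [Module A Ω] (d : Derivation ℤ A Ω)
    (M : Type*) [AddCommGroup M] [Module A M]
    -- the extension `0 → H → M → A → 0`:
    (π : M →ₗ[A] A)
    -- connection, Frobenius and filtration on `M`:
    (nabla : M → Ω ⊗[A] M)
    (hleibniz : ∀ (a : A) (x : M), nabla (a • x) = d a ⊗ₜ[A] x + a • nabla x)
    (Phi : M →+ M)
    (fil : ℤ → Submodule A M)
    -- vanishing of `u(M) = (∇(e), (1-Φ)e)` for the filtered lift `e` of `1`: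
    (e : M) (he : e ∈ fil 0) (hπe : π e = 1)
    (hnablae : nabla e = 0) (hPhie : Phi e = e) :
    -- the extension splits:
    ∃ s : A →ₗ[A] M,
      (∀ a : A, π (s a) = a) ∧
      (∀ a : A, s a ∈ fil 0) ∧
      (∀ a : A, nabla (s a) = d a ⊗ₜ[A] (s 1)) ∧
      Phi (s 1) = s 1 := by
  refine ⟨LinearMap.toSpanSingleton A M e, fun a => ?_, fun a => (fil 0).smul_mem a he,
    fun a => ?_, ?_⟩
  · simp [hπe]
  · simp [hleibniz, hnablae]
  · simp [hPhie]

theorem extension_splits_of_invariant_vanishes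
    (A : Type*) [CommRing A]
    (Ω : Type*) [AddCommGroup Ω] [Module A Ω] (d : Derivation ℤ A Ω)
    (H M : Type*) [AddCommGroup H] [Module A H] [AddCommGroup M] [Module A M]
    -- the extension `0 → H → M → A → 0`:
    (ι : H →ₗ[A] M) (π : M →ₗ[A] A)
    (hι : Function.Injective ι) (hπ : Function.Surjective π)
    (hexact : LinearMap.range ι = LinearMap.ker π)
    -- connection, Frobenius and filtration on `M`:
    (nabla : M → Ω ⊗[A] M)
    (hadd : ∀ x y, nabla (x + y) = nabla x + nabla y)
    (hleibniz : ∀ (a : A) (x : M), nabla (a • x) = d a ⊗ₜ[A] x + a • nabla x)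
    (Phi : M →+ M)
    (fil : ℤ → Submodule A M) (hfil : Antitone fil)
    -- `Fil⁰ H_dR = 0` (the filtration of `H` being induced via `ι`):
    (filH : ℤ → Submodule A H) (hfilH : ∀ i, filH i = (fil i).comap ι)
    (hfilH0 : filH 0 = ⊥)
    -- vanishing of `u(M) = (∇(e), (1-Φ)e)` for the filtered lift `e` of `1`:
    (e : M) (he : e ∈ fil 0) (hπe : π e = 1)
    (hnablae : nabla e = 0) (hPhie : Phi e = e) :
    -- the extension splits:
    ∃ s : A →ₗ[A] M,
      (∀ a : A, π (s a) = a) ∧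
      (∀ a : A, s a ∈ fil 0) ∧
      (∀ a : A, nabla (s a) = d a ⊗ₜ[A] (s 1)) ∧
      Phi (s 1) = s 1 :=
  extension_splits_of_invariant_vanishes_general A Ω d M π nabla hleibniz Phi fil e he hπe hnablae
    hPhie
end
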